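/- Conditional expectation formula for the confidence bound: Suppose the first m−1 measurement strings p_1^♯,…,p_{m−1}^♯ ∈ {X,Y,Z}^n and the first k coordinates p_m^♯[1],…,p_m^♯[k] of the m-th measurement are fixed, and all remaining entries of P ∈ {X,Y,Z}^{n×M} are i.i.d. uniform. Then E_P[Conf_ε(O;P) | P^♯] = ∑_{ℓ=1}^L exp(−(ε²/2) h(o_ℓ; [p_1^♯,…,p_{m−1}^♯])) · (1 − ν · ∏_{k'=1}^{k} 1{o_ℓ[k'] ▷ p_m^♯[k']} · 3^{−w_{¬k}(o_ℓ)}) · (1 − ν·3^{−w(o_ℓ)})^{M−m}, where ν = 1 − exp(−ε²/2) and w_{¬k}(o_ℓ) is the number of indices k' > k with o_ℓ[k'] ≠ I. -/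

import Mathlib

/-!
Conditioned on the revealed entries, the admissible measurement matrices form a product set:
each entry ranges independently over a singleton (revealed) or over all of `{X, Y, Z}`. Since
`exp (-(ε²/2) 1{o ▷ p}) = 1 - ν 1{o ▷ p}` and `1{o ▷ p} = ∏ⱼ 1{o j ▷ p j}`, each summand of `Conf`
is a product over rows of affine functions of a product over coordinates, so its average over the
product set factorizes row by row and then coordinate by coordinate. A revealed coordinate
contributes its indicator and a uniform one contributes `1` if `o j = I` and `1/3` otherwise. The
rows before `m₀` are fully revealed, row `m₀` up to coordinate `k`, and the `M - (m₀ + 1)` later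
rows not at all.
-/

inductive Pauli | I | X | Y | Z
deriving DecidableEq

instance instFintypePauli : Fintype Pauli :=
  ⟨{Pauli.I, Pauli.X, Pauli.Y, Pauli.Z}, fun x => by cases x <;> simp⟩

inductive Axis | X | Y | Z
deriving DecidableEq

instance instFintypeAxis : Fintype Axis :=
  ⟨{Axis.X, Axis.Y, Axis.Z}, fun x => by cases x <;> simp⟩

def Axis.toPauli : Axis → Pauli
  | .X => .X
  | .Y => .Y
  | .Z => .Z

/-- single-qubit hitting relation: `o = I` or `o = p`. -/
def hit1 (o : Pauli) (p : Axis) : Prop := o = Pauli.I ∨ o = p.toPauli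

instance (o : Pauli) (p : Axis) : Decidable (hit1 o p) := by unfold hit1; infer_instance

/-- `o ▷ p`: every coordinate of `o` is `I` or matches `p`. -/
def hits {n : ℕ} (o : Fin n → Pauli) (p : Fin n → Axis) : Prop := ∀ k, hit1 (o k) (p k)

instance {n : ℕ} (o : Fin n → Pauli) (p : Fin n → Axis) : Decidable (hits o p) := by
  unfold hits; infer_instance

/-- weight: number of non-identity coordinates. -/
def weight {n : ℕ} (o : Fin n → Pauli) : ℕ :=
  (Finset.univ.filter (fun k => o k ≠ Pauli.I)).card

/-- hitting count of `o` among the measurements `P`. -/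
def hitCount {n M : ℕ} (o : Fin n → Pauli) (P : Fin M → Fin n → Axis) : ℕ :=
  (Finset.univ.filter (fun m => hits o (P m))).card

/-- the confidence bound. -/
noncomputable def Conf {n M L : ℕ} (ε : ℝ) (O : Fin L → Fin n → Pauli)
    (P : Fin M → Fin n → Axis) : ℝ :=
  ∑ ℓ, Real.exp (-(ε ^ 2 / 2) * (hitCount (O ℓ) P))

open Finset
open scoped BigOperators

section Expectation

variable {ι : Type*} [Fintype ι] [DecidableEq ι] {α : ι → Type*} {K : Type*} [Field K]
  [CharZero K]

theorem Finset.expect_piFinset_prod (s : ∀ i, Finset (α i)) (f : ∀ i, α i → K) :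
    𝔼 x ∈ Fintype.piFinset s, ∏ i, f i (x i) = ∏ i, 𝔼 a ∈ s i, f i a := by
  simp only [expect_eq_sum_div_card, Fintype.card_piFinset, ← prod_univ_sum, prod_div_distrib,
    Nat.cast_prod]

theorem Finset.expect_piFinset_one_sub_mul_prod (s : ∀ i, Finset (α i))
    (hs : ∀ i, (s i).Nonempty) (c : K) (f : ∀ i, α i → K) :
    𝔼 x ∈ Fintype.piFinset s, (1 - c * ∏ i, f i (x i)) = 1 - c * ∏ i, 𝔼 a ∈ s i, f i a := by
  rw [expect_sub_distrib, expect_const (Fintype.piFinset_nonempty.2 hs), ← mul_expect,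
    expect_piFinset_prod]

end Expectation

theorem Finset.prod_univ_eq_prod_Iio_mul_mul_prod_Ioi {α M : Type*} [LinearOrder α] [Fintype α]
    [LocallyFiniteOrderBot α] [LocallyFiniteOrderTop α] [CommMonoid M] (f : α → M) (a : α) :
    ∏ x, f x = (∏ x ∈ Iio a, f x) * f a * ∏ x ∈ Ioi a, f x := by
  rw [mul_assoc, mul_prod_Ioi_eq_prod_Ici, ← prod_filter_mul_prod_filter_not univ (· < a)]
  congr 2 <;> ext x <;> simp

theorem Real.exp_mul_card_filter {ι : Type*} (c : ℝ) (s : Finset ι) (p : ι → Prop)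
    [DecidablePred p] :
    Real.exp (c * #(s.filter p)) = ∏ i ∈ s, (1 - (1 - Real.exp c) * if p i then 1 else 0) := by
  have h (i : ι) :
      (1 - (1 - Real.exp c) * if p i then 1 else 0) = if p i then Real.exp c else 1 := by
    split_ifs <;> ring
  simp_rw [h]
  rw [prod_ite, prod_const_one, mul_one, prod_const, ← Real.exp_nat_mul, mul_comm]

theorem filter_agree_eq_piFinset {ι κ α : Type*} [Fintype ι] [DecidableEq ι] [Fintype κ]
    [DecidableEq κ] [Fintype α] (R : ι → κ → Prop) [∀ i j, Decidable (R i j)] (q : ι → κ → α)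
    [DecidablePred fun x : ι → κ → α => ∀ i j, R i j → x i j = q i j] :
    univ.filter (fun x : ι → κ → α => ∀ i j, R i j → x i j = q i j)
      = Fintype.piFinset fun i => Fintype.piFinset fun j => if R i j then {q i j} else univ := by
  ext x
  simp only [mem_filter, mem_univ, true_and, Fintype.mem_piFinset]
  refine forall_congr' fun i => forall_congr' fun j => ?_
  split_ifs with h <;> simp [h]

theorem ite_hits_eq_prod_ite_hit1 {n : ℕ} (o : Fin n → Pauli) (r : Fin n → Axis) :
    (if hits o r then (1 : ℝ) else 0) = ∏ j, if hit1 (o j) (r j) then 1 else 0 := by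
  simp [prod_boole, hits]

theorem Conf_eq_sum_prod {n M L : ℕ} (ε : ℝ) (O : Fin L → Fin n → Pauli)
    (P : Fin M → Fin n → Axis) :
    Conf ε O P = ∑ ℓ, ∏ m, (1 - (1 - Real.exp (-(ε ^ 2 / 2)))
      * ∏ j, if hit1 (O ℓ j) (P m j) then 1 else 0) := by
  simp only [Conf, hitCount, Real.exp_mul_card_filter, ite_hits_eq_prod_ite_hit1]

theorem expect_ite_hit1 (o : Pauli) :
    𝔼 a : Axis, (if hit1 o a then (1 : ℝ) else 0) = if o = Pauli.I then 1 else 3⁻¹ := by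
  rw [Fintype.expect_eq_sum_div_card, show (univ : Finset Axis) = {.X, .Y, .Z} from rfl,
    show Fintype.card Axis = 3 from rfl, sum_insert (by decide), sum_insert (by decide),
    sum_singleton]
  cases o <;> norm_num +decide

theorem prod_expect_ite_hit1 {n : ℕ} (o : Fin n → Pauli) (R : Fin n → Prop) [DecidablePred R]
    (q : Fin n → Axis) :
    ∏ j, 𝔼 a ∈ (if R j then {q j} else univ), (if hit1 (o j) a then (1 : ℝ) else 0)
      = (if ∀ j, R j → hit1 (o j) (q j) then 1 else 0) / 3 ^ #{j | ¬ R j ∧ o j ≠ Pauli.I} := by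
  have h (j : Fin n) :
      𝔼 a ∈ (if R j then {q j} else univ), (if hit1 (o j) a then (1 : ℝ) else 0)
        = if R j then (if hit1 (o j) (q j) then 1 else 0)
          else (if o j = Pauli.I then 1 else 3⁻¹) := by
    split_ifs <;> simp_all [expect_ite_hit1]
  rw [prod_congr rfl fun j _ => h j, prod_ite, prod_boole, prod_ite, prod_const_one, one_mul,
    prod_const, filter_filter, inv_pow, ← div_eq_mul_inv]
  simp

theorem expect_one_sub_mul_prod_ite_hit1 {n : ℕ} (o : Fin n → Pauli) (R : Fin n → Prop)
    [DecidablePred R] (q : Fin n → Axis) (ν : ℝ) :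
    𝔼 r ∈ Fintype.piFinset (fun j => if R j then {q j} else univ),
        (1 - ν * ∏ j, if hit1 (o j) (r j) then (1 : ℝ) else 0)
      = 1 - ν * (if ∀ j, R j → hit1 (o j) (q j) then 1 else 0)
          / 3 ^ #{j | ¬ R j ∧ o j ≠ Pauli.I} := by
  have hne (j : Fin n) : (if R j then {q j} else univ).Nonempty := by
    split_ifs
    exacts [singleton_nonempty _, ⟨.X, mem_univ _⟩]
  rw [expect_piFinset_one_sub_mul_prod _ hne ν fun j a => if hit1 (o j) a then (1 : ℝ) else 0,
    prod_expect_ite_hit1, mul_div_assoc]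

theorem stmt11_general {n M L : ℕ} (ε : ℝ) (O : Fin L → Fin n → Pauli)
    (m₀ k : ℕ) (hm₀ : m₀ < M)
    (Q : Fin M → Fin n → Axis) :
    (∑ P ∈ Finset.univ.filter (fun P : Fin M → Fin n → Axis =>
        ∀ (m' : Fin M) (k' : Fin n),
          ((m' : ℕ) < m₀ ∨ ((m' : ℕ) = m₀ ∧ (k' : ℕ) < k)) → P m' k' = Q m' k'), Conf ε O P)
      / ((Finset.univ.filter (fun P : Fin M → Fin n → Axis =>
        ∀ (m' : Fin M) (k' : Fin n),
          ((m' : ℕ) < m₀ ∨ ((m' : ℕ) = m₀ ∧ (k' : ℕ) < k)) → P m' k' = Q m' k')).card : ℝ)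
    = ∑ ℓ,
        Real.exp (-(ε ^ 2 / 2) *
          ((Finset.univ.filter (fun m' : Fin M =>
              (m' : ℕ) < m₀ ∧ hits (O ℓ) (Q m'))).card : ℝ))
        * (1 - (1 - Real.exp (-(ε ^ 2 / 2)))
            * (if ∀ k' : Fin n, (k' : ℕ) < k → hit1 (O ℓ k') (Q ⟨m₀, hm₀⟩ k')
               then (1 : ℝ) else 0)
            / 3 ^ ((Finset.univ.filter (fun k' : Fin n =>
                k ≤ (k' : ℕ) ∧ O ℓ k' ≠ Pauli.I)).card))
        * (1 - (1 - Real.exp (-(ε ^ 2 / 2))) / 3 ^ weight (O ℓ)) ^ (M - (m₀ + 1)) := by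
  rw [filter_agree_eq_piFinset
      (fun (m : Fin M) (j : Fin n) => (m : ℕ) < m₀ ∨ ((m : ℕ) = m₀ ∧ (j : ℕ) < k)) Q,
    ← expect_eq_sum_div_card, expect_congr rfl fun P _ => Conf_eq_sum_prod ε O P,
    expect_sum_comm]
  set ν := 1 - Real.exp (-(ε ^ 2 / 2))
  refine sum_congr rfl fun ℓ _ => ?_
  rw [expect_piFinset_prod
      (f := fun _ (r : Fin n → Axis) => 1 - ν * ∏ j, if hit1 (O ℓ j) (r j) then 1 else 0)]
  simp only [expect_one_sub_mul_prod_ite_hit1]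
  rw [prod_univ_eq_prod_Iio_mul_mul_prod_Ioi _ ⟨m₀, hm₀⟩]
  congr 1; congr 1
  · have hfilter : ({m' | (m' : ℕ) < m₀ ∧ hits (O ℓ) (Q m')} : Finset (Fin M))
        = (Iio ⟨m₀, hm₀⟩).filter fun m' => hits (O ℓ) (Q m') := by
      ext m'
      simp [Fin.lt_def]
    rw [hfilter, Real.exp_mul_card_filter]
    refine prod_congr rfl fun m hm => ?_
    have hm : (m : ℕ) < m₀ := by simpa [Fin.lt_def] using hm
    simp only [hm, true_or, forall_const, not_true, false_and, filter_false, card_empty,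
      pow_zero, div_one]
    rfl
  · simp
  · rw [prod_eq_pow_card fun m hm => ?_, Fin.card_Ioi, show M - 1 - m₀ = M - (m₀ + 1) by omega]
    have hm : m₀ < (m : ℕ) := by simpa [Fin.lt_def] using hm
    simp [hm.not_gt, hm.ne', weight]

/-- conditional expectation formula for the confidence bound, given that
the first `m₀` measurements and the first `k` Pauli labels of measurement `m₀` are fixed
(to the values of `Q`), with all remaining labels i.i.d. uniform. -/
theorem stmt11 {n M L : ℕ} (ε : ℝ) (O : Fin L → Fin n → Pauli)
    (m₀ k : ℕ) (hm₀ : m₀ < M) (hk : k ≤ n)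
    (Q : Fin M → Fin n → Axis) :
    (∑ P ∈ Finset.univ.filter (fun P : Fin M → Fin n → Axis =>
        ∀ (m' : Fin M) (k' : Fin n),
          ((m' : ℕ) < m₀ ∨ ((m' : ℕ) = m₀ ∧ (k' : ℕ) < k)) → P m' k' = Q m' k'), Conf ε O P)
      / ((Finset.univ.filter (fun P : Fin M → Fin n → Axis =>
        ∀ (m' : Fin M) (k' : Fin n),
          ((m' : ℕ) < m₀ ∨ ((m' : ℕ) = m₀ ∧ (k' : ℕ) < k)) → P m' k' = Q m' k')).card : ℝ)
    = ∑ ℓ,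
        Real.exp (-(ε ^ 2 / 2) *
          ((Finset.univ.filter (fun m' : Fin M =>
              (m' : ℕ) < m₀ ∧ hits (O ℓ) (Q m'))).card : ℝ))
        * (1 - (1 - Real.exp (-(ε ^ 2 / 2)))
            * (if ∀ k' : Fin n, (k' : ℕ) < k → hit1 (O ℓ k') (Q ⟨m₀, hm₀⟩ k')
               then (1 : ℝ) else 0)
            / 3 ^ ((Finset.univ.filter (fun k' : Fin n =>
                k ≤ (k' : ℕ) ∧ O ℓ k' ≠ Pauli.I)).card))
        * (1 - (1 - Real.exp (-(ε ^ 2 / 2))) / 3 ^ weight (O ℓ)) ^ (M - (m₀ + 1)) :=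
  stmt11_general ε O m₀ k hm₀ Q
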